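/- arXiv:1102.2454 — 6 statements merged into one kernel-verified Lean document; each statement's English description precedes it below -/
import Mathlib

section
/- Let X be a metric space and let (ξ_k)_{k≥1} and (ζ_k)_{k≥1} be sequences in X whose ranges are dense in X and such that for every isolated point x of X the sets {k : ξ_k = x} and {k : ζ_k = x} have the same cardinality. Then for every ε > 0 there exists a permutation π of the positive integers such that dist(ξ_k, ζ_{π(k)}) < ε for all k ≥ 1 and dist(ξ_k, ζ_{π(k)}) → 0 as k → ∞. -/
/-!
By the Schröder–Bernstein theorem in the form that transports a pointwise relation, it suffices
to find injections `ℕ → ℕ` in both directions whose matched distances are `< ε` and tend to `0`.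

Such an injection is built greedily with tolerances `δ n → 0`: `ξ n` takes an unused exact
partner if one exists, and otherwise an unused `ζ j` within `δ n` of a non-isolated point `h`
that is nearly closest to `ξ n` (a dense sequence visits every neighbourhood of a non-isolated
point infinitely often). When `ξ n` is isolated and its `ζ`-fibre is used up, the equality of
fibre cardinalities forces an earlier match `i` to be non-exact with partner value `ξ n`; that
partner was chosen within `δ i` of a non-isolated point, so the distance is `< δ i + 2 δ n`.
Since such fibres are finite, only finitely many matches stay far apart.
-/

open Set Filter Metric Topology Cardinal

universe u

theorem exists_seq_forall_of_forall_exists {β : Type*} [Nonempty β] (P : ℕ → Set β → β → Prop)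
    (h : ∀ n (g : ℕ → β), (∀ m < n, P m (g '' Iio m) (g m)) → ∃ b, P n (g '' Iio n) b) :
    ∃ f : ℕ → β, ∀ n, P n (f '' Iio n) (f n) := by
  let f : ℕ → β := Nat.strongRec fun n f' =>
    Classical.epsilon (P n (range fun m : Iio n => f' m m.2))
  have hf (n : ℕ) : f n = Classical.epsilon (P n (f '' Iio n)) := by
    simp only [f]
    rw [Nat.strongRec_eq, ← image_eq_range]
  refine ⟨f, fun n => Nat.strong_induction_on n fun n ih => ?_⟩
  rw [hf n]
  exact Classical.epsilon_spec (h n f ih)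

theorem Function.injective_of_forall_notMem_image_Iio {β : Type*} {f : ℕ → β}
    (hf : ∀ n, f n ∉ f '' Iio n) : Function.Injective f := by
  intro a b hab
  rcases lt_trichotomy a b with h | h | h
  · exact absurd ⟨a, h, hab⟩ (hf b)
  · exact h
  · exact absurd ⟨b, h, hab.symm⟩ (hf a)

theorem exists_mem_notMem_apply_mem_of_mk_eq {α β : Type u} {s S : Set α} {t : Set β}
    {f : α → β} (hst : #s = #t) (hS : S.Finite) (ht : t ⊆ f '' S) (hs : ¬s ⊆ S) :
    ∃ i ∈ S, i ∉ s ∧ f i ∈ t := by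
  by_contra! H
  have htS : t ⊆ f '' (S ∩ s) := by
    intro b hb
    obtain ⟨i, hi, rfl⟩ := ht hb
    exact ⟨i, ⟨hi, by_contra fun his => H i hi his hb⟩, rfl⟩
  have hs_fin : s.Finite :=
    lt_aleph0_iff_set_finite.1 (hst ▸ ((hS.image f).subset ht).lt_aleph0)
  have hncard : s.ncard = t.ncard := congrArg toNat hst
  have : t.ncard < s.ncard := calc
    t.ncard ≤ (f '' (S ∩ s)).ncard := ncard_le_ncard htS ((hS.inter_of_left s).image f)
    _ ≤ (S ∩ s).ncard := ncard_image_le (hS.inter_of_left s)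
    _ < s.ncard := ncard_lt_ncard (inter_ssubset_right_iff.2 hs) hs_fin
  omega

theorem DenseRange.infinite_preimage_of_mem_nhds {X ι : Type*} [TopologicalSpace X] [T1Space X]
    {u : ι → X} (hu : DenseRange u) {x : X} (hx : ¬IsOpen {x}) {U : Set X} (hU : U ∈ 𝓝 x) :
    (u ⁻¹' U).Infinite := by
  have : (𝓝[≠] x).NeBot := ⟨fun h => hx ((isOpen_singleton_iff_punctured_nhds x).2 h)⟩
  obtain ⟨V, hVU, hV, hxV⟩ := mem_nhds_iff.1 hU
  intro hfin
  have hT : (u '' (u ⁻¹' U)).Finite := hfin.image u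
  obtain ⟨i, hiV, hiT⟩ := hu.exists_mem_open (hV.sdiff hT.isClosed)
    ((infinite_of_mem_nhds x (hV.mem_nhds hxV)).sdiff hT).nonempty
  exact hiT ⟨i, hVU hiV, rfl⟩

def nonIsolatedPoints (X : Type*) [TopologicalSpace X] : Set X := {x | ¬IsOpen {x}}

section GreedyInjection

variable {X : Type*} [MetricSpace X] (ξ ζ : ℕ → X) (δ : ℕ → ℝ)

def AdmissiblePartner (n : ℕ) (F : Set ℕ) (j : ℕ) : Prop :=
  j ∉ F ∧ (ξ n = ζ j ∨ ({j' | ζ j' = ξ n} ⊆ F ∧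
    (∃ h ∈ nonIsolatedPoints X, dist (ζ j) h < δ n) ∧
    dist (ξ n) (ζ j) < infDist (ξ n) (nonIsolatedPoints X) + 2 * δ n))

variable {ξ ζ δ}

theorem exists_lt_apply_eq_dist_lt_of_subset_image
    (hiso : ∀ x : X, IsOpen ({x} : Set X) → #{k | ξ k = x} = #{k | ζ k = x})
    {g : ℕ → ℕ} {n : ℕ} (hg : ∀ m < n, AdmissiblePartner ξ ζ δ m (g '' Iio m) (g m))
    (hn : IsOpen {ξ n}) (hsub : {j | ζ j = ξ n} ⊆ g '' Iio n) :
    ∃ i < n, ζ (g i) = ξ n ∧ ∃ h ∈ nonIsolatedPoints X, dist (ξ n) h < δ i := by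
  obtain ⟨i, hin, hi, hgi⟩ := exists_mem_notMem_apply_mem_of_mk_eq (hiso _ hn) (finite_Iio n)
    hsub (fun h => lt_irrefl n (h rfl))
  rcases (hg i hin).2 with hexact | ⟨-, ⟨h, hh, hdist⟩, -⟩
  · exact absurd (hexact.trans hgi) hi
  · exact ⟨i, hin, hgi, h, hh, hgi ▸ hdist⟩

theorem exists_admissiblePartner (hζ : DenseRange ζ)
    (hiso : ∀ x : X, IsOpen ({x} : Set X) → #{k | ξ k = x} = #{k | ζ k = x})
    (hδ : ∀ n, 0 < δ n) (n : ℕ) (g : ℕ → ℕ)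
    (hg : ∀ m < n, AdmissiblePartner ξ ζ δ m (g '' Iio m) (g m)) :
    ∃ j, AdmissiblePartner ξ ζ δ n (g '' Iio n) j := by
  by_cases hexact : ∃ j ∉ g '' Iio n, ξ n = ζ j
  · obtain ⟨j, hj, hjn⟩ := hexact
    exact ⟨j, hj, Or.inl hjn⟩
  have hsub : {j | ζ j = ξ n} ⊆ g '' Iio n := fun j hj =>
    by_contra fun h => hexact ⟨j, h, hj.symm⟩
  obtain ⟨h, hh, hnh⟩ : ∃ h ∈ nonIsolatedPoints X,
      dist (ξ n) h < infDist (ξ n) (nonIsolatedPoints X) + δ n := by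
    by_cases hn : IsOpen {ξ n}
    · obtain ⟨-, -, -, h, hh, -⟩ := exists_lt_apply_eq_dist_lt_of_subset_image hiso hg hn hsub
      exact (infDist_lt_iff ⟨h, hh⟩).1 (lt_add_of_pos_right _ (hδ n))
    · exact (infDist_lt_iff ⟨ξ n, hn⟩).1 (lt_add_of_pos_right _ (hδ n))
  obtain ⟨j, hjh, hj⟩ := ((hζ.infinite_preimage_of_mem_nhds hh (ball_mem_nhds h (hδ n))).sdiff
    ((finite_Iio n).image g)).nonempty
  refine ⟨j, hj, Or.inr ⟨hsub, ⟨h, hh, hjh⟩, ?_⟩⟩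
  calc dist (ξ n) (ζ j) ≤ dist (ξ n) h + dist (ζ j) h := dist_triangle_right _ _ _
    _ < infDist (ξ n) (nonIsolatedPoints X) + δ n + δ n := add_lt_add hnh hjh
    _ = _ := by ring

variable (hiso : ∀ x : X, IsOpen ({x} : Set X) → #{k | ξ k = x} = #{k | ζ k = x})
  {f : ℕ → ℕ} (hf : ∀ n, AdmissiblePartner ξ ζ δ n (f '' Iio n) (f n))
include hiso hf

theorem dist_lt_of_admissiblePartner {n : ℕ} (hn : ξ n ≠ ζ (f n)) :
    dist (ξ n) (ζ (f n)) < 2 * δ n ∨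
      ∃ i < n, ζ (f i) = ξ n ∧ IsOpen {ξ n} ∧ dist (ξ n) (ζ (f n)) < δ i + 2 * δ n := by
  obtain ⟨hsub, -, hdist⟩ := (hf n).2.resolve_left hn
  by_cases hiso_n : IsOpen {ξ n}
  · obtain ⟨i, hin, hfi, h, hh, hnh⟩ :=
      exists_lt_apply_eq_dist_lt_of_subset_image hiso (fun m _ => hf m) hiso_n hsub
    have := infDist_le_dist_of_mem (x := ξ n) hh
    exact Or.inr ⟨i, hin, hfi, hiso_n, hdist.trans_le (by linarith)⟩
  · left
    rwa [infDist_zero_of_mem (s := nonIsolatedPoints X) hiso_n, zero_add] at hdist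

theorem finite_setOf_isOpen_ne_of_admissiblePartner (v : X) :
    {n | ξ n = v ∧ IsOpen {v} ∧ ξ n ≠ ζ (f n)}.Finite := by
  rcases eq_empty_or_nonempty {n | ξ n = v ∧ IsOpen {v} ∧ ξ n ≠ ζ (f n)} with h | ⟨n, rfl, hv, hn⟩
  · exact h ▸ finite_empty
  have hζfin : {j | ζ j = ξ n}.Finite :=
    ((finite_Iio n).image f).subset ((hf n).2.resolve_left hn).1
  have hξfin : {k | ξ k = ξ n}.Finite :=
    lt_aleph0_iff_set_finite.1 (hiso _ hv ▸ hζfin.lt_aleph0)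
  exact hξfin.subset fun k hk => hk.1

end GreedyInjection

theorem exists_injective_dist_lt_tendsto {X : Type*} [MetricSpace X] {ξ ζ : ℕ → X}
    (hζ : DenseRange ζ)
    (hiso : ∀ x : X, IsOpen ({x} : Set X) → #{k | ξ k = x} = #{k | ζ k = x})
    {ε : ℝ} (hε : 0 < ε) :
    ∃ f : ℕ → ℕ, Function.Injective f ∧ (∀ n, dist (ξ n) (ζ (f n)) < ε) ∧
      Tendsto (fun n => dist (ξ n) (ζ (f n))) atTop (𝓝 0) := by
  obtain ⟨δ, hδ_pos, hδ_le, hδ_lim⟩ : ∃ δ : ℕ → ℝ,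
      (∀ n, 0 < δ n) ∧ (∀ n, δ n ≤ ε / 4) ∧ Tendsto δ atTop (𝓝 0) :=
    ⟨fun n => ε / 4 * (1 / 2) ^ n, fun n => by positivity,
      fun n => mul_le_of_le_one_right (by positivity) (pow_le_one₀ (by norm_num) (by norm_num)),
      by simpa using (tendsto_pow_atTop_nhds_zero_of_lt_one (by norm_num : (0 : ℝ) ≤ 1 / 2)
        (by norm_num)).const_mul (ε / 4)⟩
  obtain ⟨f, hf⟩ :=
    exists_seq_forall_of_forall_exists _ (exists_admissiblePartner hζ hiso hδ_pos)
  refine ⟨f, Function.injective_of_forall_notMem_image_Iio fun n => (hf n).1, fun n => ?_, ?_⟩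
  · by_cases hn : ξ n = ζ (f n)
    · simpa [hn] using hε
    rcases dist_lt_of_admissiblePartner hiso hf hn with h | ⟨i, -, -, -, h⟩
    · linarith [hδ_le n]
    · linarith [hδ_le n, hδ_le i]
  rw [← Nat.cofinite_eq_atTop, Metric.tendsto_nhds]
  intro η hη
  have hI : {i | η / 3 ≤ δ i}.Finite := by
    have := hδ_lim.eventually (gt_mem_nhds (by positivity : 0 < η / 3))
    rw [← Nat.cofinite_eq_atTop, eventually_cofinite] at this
    simpa only [not_lt] using this
  rw [eventually_cofinite]
  refine (hI.union (hI.biUnion fun i _ =>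
    finite_setOf_isOpen_ne_of_admissiblePartner hiso hf (ζ (f i)))).subset fun n hn => ?_
  simp only [mem_ofPred_eq, Real.dist_0_eq_abs, abs_of_nonneg dist_nonneg, not_lt] at hn
  have hne : ξ n ≠ ζ (f n) := fun h => by rw [h, dist_self] at hn; linarith
  by_cases hδn : η / 3 ≤ δ n
  · exact Or.inl hδn
  rcases dist_lt_of_admissiblePartner hiso hf hne with h | ⟨i, -, hfi, hiso_n, h⟩
  · exact absurd (by linarith) hδn
  · exact Or.inr (mem_biUnion (show η / 3 ≤ δ i by linarith) ⟨hfi.symm, hfi ▸ hiso_n, hne⟩)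

/-- Let `X` be a metric space and `ξ`, `ζ` sequences in `X` with dense
range such that every isolated point of `X` (a point whose singleton is open) is hit by `ξ`
and by `ζ` the same number of times (same cardinality of fibers).  Then for every `ε > 0`
there is a permutation `π` of the indices with `dist (ξ k) (ζ (π k)) < ε` for all `k`
and `dist (ξ k) (ζ (π k)) → 0`. -/
theorem stmt0 {X : Type*} [MetricSpace X] (ξ ζ : ℕ → X)
    (hξ : DenseRange ξ) (hζ : DenseRange ζ)
    (hiso : ∀ x : X, IsOpen ({x} : Set X) →
      Cardinal.mk {k : ℕ | ξ k = x} = Cardinal.mk {k : ℕ | ζ k = x}) :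
    ∀ ε : ℝ, 0 < ε → ∃ π : Equiv.Perm ℕ,
      (∀ k : ℕ, dist (ξ k) (ζ (π k)) < ε) ∧
      Filter.Tendsto (fun k : ℕ => dist (ξ k) (ζ (π k))) Filter.atTop (nhds 0) := by
  intro ε hε
  obtain ⟨f, hf, hfε, hf0⟩ := exists_injective_dist_lt_tendsto hζ hiso hε
  obtain ⟨g, hg, hgε, hg0⟩ :=
    exists_injective_dist_lt_tendsto hξ (fun x hx => (hiso x hx).symm) hε
  obtain ⟨π, hπ, hπR⟩ := Function.Embedding.schroeder_bernstein_of_rel hf hg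
    (fun k j => dist (ξ k) (ζ j) < ε ∧
      dist (ξ k) (ζ j) ≤ max (dist (ξ k) (ζ (f k))) (dist (ζ j) (ξ (g j))))
    (fun k => ⟨hfε k, le_max_left _ _⟩)
    (fun j => ⟨dist_comm (ξ (g j)) (ζ j) ▸ hgε j, dist_comm (ξ (g j)) (ζ j) ▸ le_max_right _ _⟩)
  refine ⟨Equiv.ofBijective π hπ, fun k => (hπR k).1, ?_⟩
  have hgπ := hg0.comp hπ.injective.nat_tendsto_atTop
  exact squeeze_zero (fun k => dist_nonneg) (fun k => (hπR k).2) (by simpa using hf0.max hgπ)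
end

section
/- Let H₁ and H₂ be complex Hilbert spaces, and let Q₁ and Q₂ be closed densely defined linear operators on H₁ and H₂ respectively. Equip Hᵢ × Hᵢ with the Hilbert norm ‖(v,w)‖ = (‖v‖² + ‖w‖²)^{1/2}, and for (v,w) ∈ Hᵢ × Hᵢ let Γ_{Qᵢ}(v,w) denote the distance from (v,w) to the graph {(u, Qᵢu) : u ∈ D(Qᵢ)}. Let U : H₁ → H₂ be a unitary operator (a surjective linear isometry). Then Γ_{Q₂}(Uv, Uw) = Γ_{Q₁}(v, w) for all v, w ∈ H₁ if and only if U(D(Q₁)) = D(Q₂) and U(Q₁v) = Q₂(Uv) for every v ∈ D(Q₁). -/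
open scoped InnerProductSpace

/-- The distance from the pair `(v, w)` to the graph of the (partially defined) operator `Q`,
where `H × H` carries the Hilbert norm `‖(v,w)‖ = (‖v‖² + ‖w‖²)^(1/2)`. -/
noncomputable def graphDist {H : Type*} [NormedAddCommGroup H] [InnerProductSpace ℂ H]
    (Q : H →ₗ.[ℂ] H) (v w : H) : ℝ :=
  sInf (Set.range fun u : Q.domain =>
    Real.sqrt (‖v - (u : H)‖ ^ 2 + ‖w - Q u‖ ^ 2))

/-!
`graphDist Q` is the distance in `H ⊕₂ H` to the graph of `Q`, so for closed `Q` its zero set is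
exactly the graph. A unitary preserving these distance functions therefore maps the graph of `Q₁`
into that of `Q₂`, and `U⁻¹` maps it back; equality of graphs under `U × U` is the domain and
intertwining condition. Conversely `U × U` is an isometry of `H ⊕₂ H` carrying one graph onto
the other, so it preserves distances to them.
-/

open Metric

namespace LinearPMap

variable {R E F E' F' : Type*} [Ring R] [AddCommGroup E] [Module R E] [AddCommGroup F] [Module R F]
  [AddCommGroup E'] [Module R E'] [AddCommGroup F'] [Module R F']

theorem coe_graph_eq_range (f : E →ₗ.[R] F) :
    (f.graph : Set (E × F)) = Set.range fun x : f.domain => ((x : E), f x) := by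
  ext; exact f.mem_graph_iff'

theorem image_fst_graph (f : E →ₗ.[R] F) : Prod.fst '' (f.graph : Set (E × F)) = f.domain := by
  simpa using congrArg ((↑) : Submodule R E → Set E) f.graph_map_fst_eq_domain

theorem image_graph_prodMap_eq_iff (f : E →ₗ.[R] F) (g : E' →ₗ.[R] F') (e₁ : E → E')
    (e₂ : F → F') :
    Prod.map e₁ e₂ '' f.graph = g.graph ↔
      e₁ '' f.domain = g.domain ∧
        ∀ (x : E) (hx : x ∈ f.domain) (hx' : e₁ x ∈ g.domain), e₂ (f ⟨x, hx⟩) = g ⟨e₁ x, hx'⟩ := by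
  constructor
  · intro h
    refine ⟨?_, fun x hx hx' => ?_⟩
    · rw [← f.image_fst_graph, ← g.image_fst_graph, ← h, Set.image_image, Set.image_image]
      rfl
    · have hmem : (e₁ x, e₂ (f ⟨x, hx⟩)) ∈ (g.graph : Set (E' × F')) :=
        h ▸ Set.mem_image_of_mem _ (f.mem_graph ⟨x, hx⟩)
      exact g.mem_graph_snd_inj hmem (g.mem_graph ⟨e₁ x, hx'⟩) rfl
  · rintro ⟨hdom, hmap⟩
    rw [f.coe_graph_eq_range, g.coe_graph_eq_range, ← Set.range_comp]
    apply subset_antisymm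
    · rintro _ ⟨⟨x, hx⟩, rfl⟩
      have hx' : e₁ x ∈ (g.domain : Set E') := hdom ▸ Set.mem_image_of_mem e₁ hx
      exact ⟨⟨e₁ x, hx'⟩, by simp [hmap x hx hx']⟩
    · rintro _ ⟨⟨y, hy⟩, rfl⟩
      obtain ⟨x, hx, rfl⟩ : y ∈ e₁ '' f.domain := by rwa [hdom]
      exact ⟨⟨x, hx⟩, by simp [hmap x hx hy]⟩

end LinearPMap

section GraphDist

variable {H H₁ H₂ : Type*} [NormedAddCommGroup H] [InnerProductSpace ℂ H]
  [NormedAddCommGroup H₁] [InnerProductSpace ℂ H₁] [NormedAddCommGroup H₂] [InnerProductSpace ℂ H₂]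

theorem graphDist_eq_infDist (Q : H →ₗ.[ℂ] H) (v w : H) :
    graphDist Q v w =
      infDist (WithLp.toLp 2 (v, w)) (WithLp.toLp 2 '' (Q.graph : Set (H × H))) := by
  rw [infDist_eq_iInf, graphDist, iInf, ← Set.image_eq_range, Set.image_image,
    Q.coe_graph_eq_range, ← Set.range_comp]
  simp_rw [Function.comp_def, WithLp.prod_dist_eq_of_L2, dist_eq_norm]
  rfl

theorem graphDist_eq_zero_iff_mem_closure (Q : H →ₗ.[ℂ] H) (v w : H) :
    graphDist Q v w = 0 ↔ (v, w) ∈ closure (Q.graph : Set (H × H)) := by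
  have hne : (WithLp.toLp 2 '' (Q.graph : Set (H × H))).Nonempty :=
    ⟨_, Set.mem_image_of_mem _ Q.graph.zero_mem⟩
  have hcl : WithLp.toLp 2 '' closure (Q.graph : Set (H × H)) =
      closure (WithLp.toLp 2 '' (Q.graph : Set (H × H))) :=
    (WithLp.homeomorphProd 2 H H).symm.image_closure _
  rw [graphDist_eq_infDist, ← mem_closure_iff_infDist_zero hne, ← hcl]
  exact (WithLp.toLp_injective 2).mem_set_image

theorem graphDist_eq_zero_iff {Q : H →ₗ.[ℂ] H} (hQ : Q.IsClosed) (v w : H) :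
    graphDist Q v w = 0 ↔ (v, w) ∈ Q.graph := by
  rw [graphDist_eq_zero_iff_mem_closure, hQ.closure_eq, SetLike.mem_coe]

theorem mapsTo_graph_of_graphDist_eq {Q₁ : H₁ →ₗ.[ℂ] H₁} {Q₂ : H₂ →ₗ.[ℂ] H₂} (hQ₂ : Q₂.IsClosed)
    {U : H₁ → H₂} (hU : ∀ v w, graphDist Q₂ (U v) (U w) = graphDist Q₁ v w) :
    Set.MapsTo (Prod.map U U) Q₁.graph Q₂.graph := fun p hp => by
  rw [SetLike.mem_coe, ← graphDist_eq_zero_iff hQ₂, Prod.map_fst, Prod.map_snd, hU,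
    graphDist_eq_zero_iff_mem_closure]
  exact subset_closure hp

theorem graphDist_map_eq_of_image_graph {Q₁ : H₁ →ₗ.[ℂ] H₁} {Q₂ : H₂ →ₗ.[ℂ] H₂}
    (U : H₁ →ₗᵢ[ℂ] H₂) (hU : Prod.map U U '' Q₁.graph = Q₂.graph) (v w : H₁) :
    graphDist Q₂ (U v) (U w) = graphDist Q₁ v w := by
  rw [graphDist_eq_infDist, graphDist_eq_infDist, ← hU,
    ← infDist_image (U.withLpProdMap 2 U).isometry, Set.image_image, Set.image_image]
  rfl

end GraphDist

theorem stmt1_general {H₁ H₂ : Type*}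
    [NormedAddCommGroup H₁] [InnerProductSpace ℂ H₁]
    [NormedAddCommGroup H₂] [InnerProductSpace ℂ H₂]
    (Q₁ : H₁ →ₗ.[ℂ] H₁) (Q₂ : H₂ →ₗ.[ℂ] H₂)
    (hQ₁closed : Q₁.IsClosed) (hQ₂closed : Q₂.IsClosed)
    (U : H₁ ≃ₗᵢ[ℂ] H₂) :
    (∀ v w : H₁, graphDist Q₂ (U v) (U w) = graphDist Q₁ v w) ↔
      (U '' (Q₁.domain : Set H₁) = (Q₂.domain : Set H₂) ∧
        ∀ (v : H₁) (hv : v ∈ Q₁.domain) (hv' : U v ∈ Q₂.domain),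
          U (Q₁ ⟨v, hv⟩) = Q₂ ⟨U v, hv'⟩) := by
  rw [← Q₁.image_graph_prodMap_eq_iff Q₂ U U]
  refine ⟨fun hU => ?_, graphDist_map_eq_of_image_graph U.toLinearIsometry⟩
  have hU_symm : ∀ v w, graphDist Q₁ (U.symm v) (U.symm w) = graphDist Q₂ v w := fun v w => by
    rw [← hU, U.apply_symm_apply, U.apply_symm_apply]
  refine (mapsTo_graph_of_graphDist_eq hQ₂closed hU).image_subset.antisymm fun p hp => ?_
  exact ⟨_, mapsTo_graph_of_graphDist_eq hQ₁closed hU_symm hp,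
    Prod.ext (U.apply_symm_apply _) (U.apply_symm_apply _)⟩

/-- Let `Q₁`, `Q₂` be closed densely defined operators on complex Hilbert
spaces `H₁`, `H₂` and `U : H₁ → H₂` a unitary operator.  Then `U` preserves the graph
distance functions `Γ_{Q₁}`, `Γ_{Q₂}` if and only if `U` maps the domain of `Q₁` onto the
domain of `Q₂` and intertwines `Q₁` and `Q₂`. -/
theorem stmt1 {H₁ H₂ : Type*}
    [NormedAddCommGroup H₁] [InnerProductSpace ℂ H₁] [CompleteSpace H₁]
    [NormedAddCommGroup H₂] [InnerProductSpace ℂ H₂] [CompleteSpace H₂]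
    (Q₁ : H₁ →ₗ.[ℂ] H₁) (Q₂ : H₂ →ₗ.[ℂ] H₂)
    (hQ₁dense : Dense (Q₁.domain : Set H₁)) (hQ₂dense : Dense (Q₂.domain : Set H₂))
    (hQ₁closed : Q₁.IsClosed) (hQ₂closed : Q₂.IsClosed)
    (U : H₁ ≃ₗᵢ[ℂ] H₂) :
    (∀ v w : H₁, graphDist Q₂ (U v) (U w) = graphDist Q₁ v w) ↔
      (U '' (Q₁.domain : Set H₁) = (Q₂.domain : Set H₂) ∧
        ∀ (v : H₁) (hv : v ∈ Q₁.domain) (hv' : U v ∈ Q₂.domain),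
          U (Q₁ ⟨v, hv⟩) = Q₂ ⟨U v, hv'⟩) :=
  stmt1_general Q₁ Q₂ hQ₁closed hQ₂closed U
end

section
/- Let μ and ν be finite Borel measures on ℝ. Then the following are equivalent: (a) there exists a linear isometry U : L²(ℝ, μ) → L²(ℝ, ν) such that U(g·f) = g·(Uf) for every bounded Borel function g : ℝ → ℂ and every f ∈ L²(ℝ, μ); (b) μ is absolutely continuous with respect to ν. -/
/-!
If `μ ≪ ν`, multiplication by `√(dμ/dν)` is an isometry `L²(μ) → L²(ν)`, because
`∫ |√(dμ/dν) f|² dν = ∫ |f|² dμ`, and it commutes with every multiplication operator.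
Conversely, if `U` is injective and commutes with multiplication by indicators and `ν s = 0`,
then `U (𝟙_s) = 𝟙_s · U 1 = 0` in `L²(ν)`, so `𝟙_s = 0` in `L²(μ)`, i.e. `μ s = 0`.
-/

open scoped ENNReal NNReal

namespace MeasureTheory

variable {α 𝕜 : Type*} [MeasurableSpace α] [RCLike 𝕜] {μ ν : Measure α}

namespace Measure

noncomputable def sqrtRNDeriv (μ ν : Measure α) (x : α) : ℝ≥0 :=
  NNReal.sqrt (μ.rnDeriv ν x).toNNReal

@[fun_prop]
lemma measurable_sqrtRNDeriv (μ ν : Measure α) : Measurable (μ.sqrtRNDeriv ν) := by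
  unfold sqrtRNDeriv; fun_prop

lemma sqrtRNDeriv_sq_ae_eq [SigmaFinite μ] :
    (fun x => (μ.sqrtRNDeriv ν x : ℝ≥0∞) ^ 2) =ᵐ[ν] μ.rnDeriv ν := by
  filter_upwards [μ.rnDeriv_lt_top ν] with x hx
  rw [sqrtRNDeriv, ← ENNReal.coe_pow, NNReal.sq_sqrt, ENNReal.coe_toNNReal hx.ne]

variable [HaveLebesgueDecomposition μ ν] {E : Type*} [NormedAddCommGroup E] [NormedSpace ℝ E]

lemma sqrtRNDeriv_smul_ae_eq (hμν : μ ≪ ν) {φ ψ : α → E} (h : φ =ᵐ[μ] ψ) :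
    (fun x => (μ.sqrtRNDeriv ν x : ℝ) • φ x) =ᵐ[ν]
      fun x => (μ.sqrtRNDeriv ν x : ℝ) • ψ x := by
  rw [Filter.EventuallyEq, ← withDensity_rnDeriv_eq μ ν hμν,
    ae_withDensity_iff (μ.measurable_rnDeriv ν)] at h
  filter_upwards [h] with x hx
  by_cases h0 : μ.rnDeriv ν x = 0
  · simp [sqrtRNDeriv, h0]
  · rw [hx h0]

lemma eLpNorm_sqrtRNDeriv_smul [SigmaFinite μ] (hμν : μ ≪ ν) {φ : α → E}
    (hφ : AEStronglyMeasurable φ ν) :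
    eLpNorm (fun x => (μ.sqrtRNDeriv ν x : ℝ) • φ x) 2 ν = eLpNorm φ 2 μ := by
  simp only [eLpNorm_eq_lintegral_rpow_enorm_toReal two_ne_zero ENNReal.ofNat_ne_top,
    ENNReal.toReal_ofNat, ENNReal.rpow_ofNat]
  congr 1
  rw [← lintegral_rnDeriv_mul hμν (hφ.enorm.pow_const 2)]
  refine lintegral_congr_ae ?_
  filter_upwards [μ.sqrtRNDeriv_sq_ae_eq (ν := ν)] with x hx
  rw [enorm_smul, NNReal.enorm_eq, mul_pow, hx]

end Measure

namespace Lp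

variable [SigmaFinite μ] [μ.HaveLebesgueDecomposition ν] {E : Type*} [NormedAddCommGroup E]
  [NormedSpace ℝ E] [NormedSpace 𝕜 E] [SMulCommClass ℝ 𝕜 E]

lemma memLp_sqrtRNDeriv_smul (hμν : μ ≪ ν) (f : Lp E 2 μ) :
    MemLp (fun x => (μ.sqrtRNDeriv ν x : ℝ) • f x) 2 ν := by
  have hf : AEStronglyMeasurable f ν := (Lp.stronglyMeasurable f).aestronglyMeasurable
  refine ⟨by fun_prop, ?_⟩
  rw [Measure.eLpNorm_sqrtRNDeriv_smul hμν hf]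
  exact Lp.eLpNorm_lt_top f

variable (𝕜) in
noncomputable def sqrtRNDerivSMul (hμν : μ ≪ ν) : Lp E 2 μ →ₗᵢ[𝕜] Lp E 2 ν where
  toFun f := (memLp_sqrtRNDeriv_smul hμν f).toLp _
  map_add' f g := by
    rw [← MemLp.toLp_add, MemLp.toLp_eq_toLp_iff]
    filter_upwards [Measure.sqrtRNDeriv_smul_ae_eq hμν (Lp.coeFn_add f g)] with x hx
    simp only [hx, Pi.add_apply, smul_add]
  map_smul' c f := by
    rw [RingHom.id_apply, ← MemLp.toLp_const_smul, MemLp.toLp_eq_toLp_iff]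
    filter_upwards [Measure.sqrtRNDeriv_smul_ae_eq hμν (Lp.coeFn_smul c f)] with x hx
    rw [hx, Pi.smul_apply, Pi.smul_apply, smul_comm]
  norm_map' f := by
    rw [LinearMap.coe_mk, AddHom.coe_mk, Lp.norm_toLp, Lp.norm_def,
      Measure.eLpNorm_sqrtRNDeriv_smul hμν (Lp.stronglyMeasurable f).aestronglyMeasurable]

variable (𝕜) in
lemma coeFn_sqrtRNDerivSMul (hμν : μ ≪ ν) (f : Lp E 2 μ) :
    sqrtRNDerivSMul 𝕜 hμν f =ᵐ[ν] fun x => (μ.sqrtRNDeriv ν x : ℝ) • f x :=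
  MemLp.coeFn_toLp (memLp_sqrtRNDeriv_smul hμν f)

lemma sqrtRNDerivSMul_toLp_smul (hμν : μ ≪ ν) (g : α → 𝕜) (f : Lp E 2 μ)
    (h₁ : MemLp (fun x => g x • f x) 2 μ)
    (h₂ : MemLp (fun x => g x • sqrtRNDerivSMul 𝕜 hμν f x) 2 ν) :
    sqrtRNDerivSMul 𝕜 hμν (h₁.toLp _) = h₂.toLp _ := by
  refine Lp.ext ?_
  filter_upwards [coeFn_sqrtRNDerivSMul 𝕜 hμν (h₁.toLp _),
    Measure.sqrtRNDeriv_smul_ae_eq hμν h₁.coeFn_toLp, h₂.coeFn_toLp,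
    coeFn_sqrtRNDerivSMul 𝕜 hμν f]
    with x h_lhs h_toLp h_rhs h_f
  rw [h_lhs, h_toLp, h_rhs, h_f, smul_comm]

end Lp

theorem Measure.absolutelyContinuous_of_injective_indicator_mul [IsFiniteMeasure μ]
    (U : Lp 𝕜 2 μ →+ Lp 𝕜 2 ν) (hU_inj : Function.Injective U)
    (hU : ∀ s, MeasurableSet s → ∀ f : Lp 𝕜 2 μ,
      ∀ (h₁ : MemLp (s.indicator 1 * ⇑f) 2 μ) (h₂ : MemLp (s.indicator 1 * ⇑(U f)) 2 ν),
        U (h₁.toLp _) = h₂.toLp _) :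
    μ ≪ ν := by
  refine Measure.AbsolutelyContinuous.mk fun s hs hνs => ?_
  let one := Lp.const 2 μ (1 : 𝕜)
  have h_one : ⇑one =ᵐ[μ] 1 := Lp.coeFn_const 2 μ 1
  have h_ind_ν : s.indicator (1 : α → 𝕜) =ᵐ[ν] 0 := by
    rwa [Set.indicator_ae_eq_zero, Function.support_one, Set.inter_univ]
  have h_ind_μ : s.indicator 1 * ⇑one =ᵐ[μ] s.indicator 1 := by
    simpa only [mul_one] using
      (Filter.EventuallyEq.refl _ (s.indicator (1 : α → 𝕜))).mul h_one
  have h_zero_ν : s.indicator 1 * ⇑(U one) =ᵐ[ν] 0 := by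
    simpa only [zero_mul] using h_ind_ν.mul (Filter.EventuallyEq.refl _ ⇑(U one))
  have h₁ : MemLp (s.indicator 1 * ⇑one) 2 μ :=
    ((memLp_const (1 : 𝕜)).indicator hs : MemLp (s.indicator 1) 2 μ).ae_eq h_ind_μ.symm
  have h₂ : MemLp (s.indicator 1 * ⇑(U one)) 2 ν := MemLp.zero.ae_eq h_zero_ν.symm
  have h_toLp_zero : h₁.toLp _ = 0 := by
    refine hU_inj ?_
    rw [hU s hs one h₁ h₂, map_zero, Lp.eq_zero_iff_ae_eq_zero]
    exact h₂.coeFn_toLp.trans h_zero_ν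
  rw [Lp.eq_zero_iff_ae_eq_zero] at h_toLp_zero
  have h_ind_μ_zero := h_ind_μ.symm.trans (h₁.coeFn_toLp.symm.trans h_toLp_zero)
  rwa [Set.indicator_ae_eq_zero, Function.support_one, Set.inter_univ] at h_ind_μ_zero

end MeasureTheory

open MeasureTheory

/-- For finite Borel measures `μ`, `ν` on `ℝ`, there exists a linear
isometry `U : L²(ℝ, μ) → L²(ℝ, ν)` commuting with multiplication by every bounded Borel
function if and only if `μ` is absolutely continuous with respect to `ν`. -/
theorem stmt3 (μ ν : Measure ℝ) [IsFiniteMeasure μ] [IsFiniteMeasure ν] :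
    (∃ U : Lp ℂ 2 μ →ₗᵢ[ℂ] Lp ℂ 2 ν,
      ∀ g : ℝ → ℂ, Measurable g → (∃ C : ℝ, ∀ x, ‖g x‖ ≤ C) →
        ∀ f : Lp ℂ 2 μ,
          ∀ (h₁ : MemLp (fun x => g x * f x) 2 μ)
            (h₂ : MemLp (fun x => g x * (U f : ℝ → ℂ) x) 2 ν),
            U (h₁.toLp _) = h₂.toLp _) ↔
      μ ≪ ν := by
  refine ⟨fun ⟨U, hU⟩ => ?_, fun hμν =>
    ⟨Lp.sqrtRNDerivSMul ℂ hμν, fun g _ _ f => Lp.sqrtRNDerivSMul_toLp_smul hμν g f⟩⟩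
  refine Measure.absolutelyContinuous_of_injective_indicator_mul U.toLinearMap.toAddMonoidHom
    U.injective fun s hs => hU _ (measurable_const.indicator hs) ⟨1, fun x => ?_⟩
  exact (norm_indicator_le_norm_self _ x).trans norm_one.le
end

section
/- Let H₁ and H₂ be separable complex Hilbert spaces with Hilbert bases (v_k)_{k≥1} and (w_k)_{k≥1} respectively, and let (ξ_k)_{k≥1} and (ζ_k)_{k≥1} be sequences of real numbers such that the closures of {ξ_k : k ≥ 1} and {ζ_k : k ≥ 1} in ℝ are equal to a common set X, and for every isolated point x of X the sets {k : ξ_k = x} and {k : ζ_k = x} have the same cardinality. Then for every ε > 0 there exist a permutation π of the positive integers and a unitary operator U : H₁ → H₂ such that U v_k = w_{π(k)} for all k ≥ 1, |ξ_k − ζ_{π(k)}| < ε for all k ≥ 1, and ξ_k − ζ_{π(k)} → 0 as k → ∞. -/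
/-!
Call `b` an `ε`-approximate rearrangement of `a` if some bijection of the indices moves every
value by less than `ε` and by amounts tending to `0`. Value-preserving bijections are such
rearrangements, and the notion is stable under composition (the tolerances add) and under
disjoint unions.

The key point is absorption: adjoining to a sequence `a` a countable family `b` of cluster points
of `a` produces an approximate rearrangement of `a`. For each new point `b j` pick an infinite row
of distinct indices whose values converge to `b j`, and shift every row by one place.

The sequences `ξ` and `ζ` have the same cluster points, and every other value is an isolated point
of `X`, of the same finite multiplicity in both. Hence `ξ` with the cluster-valued terms of `ζ`
adjoined is a value-preserving rearrangement of `ζ` with the cluster-valued terms of `ξ` adjoined,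
and absorption on both sides gives the permutation. The unitary sends one Hilbert basis to the
other, reindexed by it.
-/

open Filter Topology Set Function

theorem Filter.Tendsto.sumElim_cofinite {α β γ : Type*} {f : α → γ} {g : β → γ} {l : Filter γ}
    (hf : Tendsto f cofinite l) (hg : Tendsto g cofinite l) :
    Tendsto (Sum.elim f g) cofinite l := fun s hs => by
  rw [mem_map, mem_cofinite, ← finite_preimage_inl_and_inr]
  exact ⟨hf hs, hg hs⟩

theorem exists_injective_forall_mem {K : Type*} [Countable K] {S : K → Set ℕ}
    (hS : ∀ k, (S k).Infinite) : ∃ κ : K → ℕ, Injective κ ∧ ∀ k, κ k ∈ S k := by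
  obtain ⟨ι, hι⟩ := Countable.exists_injective_nat K
  obtain ⟨φ, hφ, hφS⟩ := extraction_forall_of_frequently
    (P := fun n m => ∀ k, ι k = n → m ∈ S k) fun n => by
      by_cases hn : ∃ k, ι k = n
      · obtain ⟨k, rfl⟩ := hn
        exact (Nat.frequently_atTop_iff_infinite.2 (hS k)).mono fun m hm k' hk' => hι hk' ▸ hm
      · push Not at hn
        exact Frequently.of_forall fun m k hk => absurd hk (hn k)
  exact ⟨φ ∘ ι, hφ.injective.comp hι, fun k => hφS (ι k) k rfl⟩

theorem exists_pos_le_tendsto_zero (K : Type*) [Countable K] {r : ℝ} (hr : 0 < r) :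
    ∃ δ : K → ℝ, (∀ k, 0 < δ k ∧ δ k ≤ r) ∧ Tendsto δ cofinite (𝓝 0) := by
  obtain ⟨ι, hι⟩ := Countable.exists_injective_nat K
  refine ⟨fun k => r * (1 / 2) ^ ι k, fun k => ⟨by positivity, ?_⟩, ?_⟩
  · exact mul_le_of_le_one_right hr.le (pow_le_one₀ (by norm_num) (by norm_num))
  · have := (tendsto_pow_atTop_nhds_zero_of_lt_one (r := (1 / 2 : ℝ)) (by norm_num)
      (by norm_num)).const_mul r
    rw [mul_zero, ← Nat.cofinite_eq_atTop] at this
    exact this.comp hι.tendsto_cofinite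

def Equiv.prodNatSumSelf (J : Type*) : (J × ℕ) ⊕ J ≃ J × ℕ where
  toFun := Sum.elim (fun p => (p.1, p.2 + 1)) (fun j => (j, 0))
  invFun p := Nat.casesOn p.2 (Sum.inr p.1) (fun m => Sum.inl (p.1, m))
  left_inv := by rintro (⟨j, m⟩ | j) <;> rfl
  right_inv := by rintro ⟨j, _ | m⟩ <;> rfl

def ApproxRearrangement {I J : Type*} (ε : ℝ) (a : I → ℝ) (b : J → ℝ) : Prop :=
  ∃ e : I ≃ J, (∀ i, |a i - b (e i)| < ε) ∧
    Tendsto (fun i => a i - b (e i)) cofinite (𝓝 0)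

namespace ApproxRearrangement

variable {I I' J J' K : Type*} {ε δ : ℝ} {a : I → ℝ} {a' : I' → ℝ} {b : J → ℝ}
  {b' : J' → ℝ} {c : K → ℝ}

theorem refl (hε : 0 < ε) (a : I → ℝ) : ApproxRearrangement ε a a :=
  ⟨Equiv.refl I, fun _ => by simpa using hε, by simpa using tendsto_const_nhds⟩

theorem symm (h : ApproxRearrangement ε a b) : ApproxRearrangement ε b a := by
  obtain ⟨e, hlt, hlim⟩ := h
  refine ⟨e.symm, fun j => by simpa [abs_sub_comm] using hlt (e.symm j), ?_⟩
  simpa [Function.comp_def] using (hlim.comp e.symm.injective.tendsto_cofinite).neg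

theorem trans (hab : ApproxRearrangement ε a b) (hbc : ApproxRearrangement δ b c) :
    ApproxRearrangement (ε + δ) a c := by
  obtain ⟨e, hlt, hlim⟩ := hab
  obtain ⟨f, hlt', hlim'⟩ := hbc
  refine ⟨e.trans f, fun i => ?_, ?_⟩
  · calc |a i - c (f (e i))| = |(a i - b (e i)) + (b (e i) - c (f (e i)))| := by ring_nf
      _ ≤ |a i - b (e i)| + |b (e i) - c (f (e i))| := abs_add_le _ _
      _ < ε + δ := add_lt_add (hlt i) (hlt' (e i))
  · simpa using hlim.add (hlim'.comp e.injective.tendsto_cofinite)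

theorem congr_left (e : I ≃ I') (ha : ∀ i, a' (e i) = a i) (h : ApproxRearrangement ε a b) :
    ApproxRearrangement ε a' b := by
  obtain ⟨f, hlt, hlim⟩ := h
  refine ⟨e.symm.trans f, fun i => ?_, ?_⟩
  · simpa [← ha] using hlt (e.symm i)
  · simpa [Function.comp_def, ← ha] using hlim.comp e.symm.injective.tendsto_cofinite

theorem congr_right (e : J ≃ J') (hb : ∀ j, b' (e j) = b j) (h : ApproxRearrangement ε a b) :
    ApproxRearrangement ε a b' := by
  obtain ⟨f, hlt, hlim⟩ := h
  exact ⟨f.trans e, by simpa [hb] using hlt, by simpa [hb] using hlim⟩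

theorem sumElim (ha : ApproxRearrangement ε a a') (hb : ApproxRearrangement ε b b') :
    ApproxRearrangement ε (Sum.elim a b) (Sum.elim a' b') := by
  obtain ⟨e, hlt, hlim⟩ := ha
  obtain ⟨f, hlt', hlim'⟩ := hb
  refine ⟨e.sumCongr f, by rintro (i | j) <;> simp [hlt, hlt'], ?_⟩
  convert hlim.sumElim_cofinite hlim' using 1
  ext (i | j) <;> rfl

theorem sumElim_prod_nat (c : J × ℕ → ℝ) (b : J → ℝ) (hc : ∀ p, |c p - b p.1| < ε / 2)
    (hlim : Tendsto (fun p => c p - b p.1) cofinite (𝓝 0)) :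
    ApproxRearrangement ε (Sum.elim c b) c := by
  refine ⟨Equiv.prodNatSumSelf J, ?_, ?_⟩
  · rintro (⟨j, m⟩ | j)
    · calc |c (j, m) - c (j, m + 1)| = |(c (j, m) - b j) - (c (j, m + 1) - b j)| := by ring_nf
        _ ≤ |c (j, m) - b j| + |c (j, m + 1) - b j| := abs_sub _ _
        _ < ε / 2 + ε / 2 := add_lt_add (hc _) (hc _)
        _ = ε := add_halves ε
    · show |b j - c (j, 0)| < ε
      rw [abs_sub_comm]
      linarith [abs_nonneg (c (j, 0) - b j), hc (j, 0)]
  · have hsucc : Injective fun p : J × ℕ => (p.1, p.2 + 1) := fun p q h => by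
      simp only [Prod.mk.injEq, add_left_inj] at h; exact Prod.ext h.1 h.2
    have hzero : Injective fun j : J => (j, 0) := fun i j h => (Prod.mk.inj h).1
    have h₁ := hlim.sub (hlim.comp hsucc.tendsto_cofinite)
    have h₂ := (hlim.comp hzero.tendsto_cofinite).neg
    simp only [sub_zero, neg_zero] at h₁ h₂
    convert h₁.sumElim_cofinite h₂ using 1
    ext (p | j) <;> simp [Equiv.prodNatSumSelf]

theorem sumElim_of_mapClusterPt [Countable J] (a : ℕ → ℝ) (b : J → ℝ)
    (hb : ∀ j, MapClusterPt (b j) atTop a) (hε : 0 < ε) :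
    ApproxRearrangement ε (Sum.elim a b) a := by
  classical
  obtain ⟨δ, hδ, hδlim⟩ := exists_pos_le_tendsto_zero (J × ℕ) (half_pos hε)
  obtain ⟨κ, hκ, hclose⟩ := exists_injective_forall_mem
    (S := fun p => {k | dist (a k) (b p.1) < δ p}) fun p => Nat.frequently_atTop_iff_infinite.1 <|
      mapClusterPt_iff_frequently.1 (hb p.1) _ (Metric.ball_mem_nhds _ (hδ p).1)
  simp only [mem_ofPred_eq, Real.dist_eq] at hclose
  have hrow := sumElim_prod_nat (a ∘ κ) b (fun p => (hclose p).trans_le (hδ p).2)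
    (squeeze_zero_norm (fun p => (hclose p).le) hδlim)
  let σ : {k // k ∉ range κ} ⊕ (J × ℕ) ≃ ℕ :=
    ((Equiv.refl _).sumCongr (Equiv.ofInjective κ hκ)).trans
      ((Equiv.sumComm _ _).trans (Equiv.sumCompl (· ∈ range κ)))
  refine (((refl hε fun k : {k // k ∉ range κ} => a k).sumElim hrow).congr_left
    ((Equiv.sumAssoc _ _ _).symm.trans (σ.sumCongr (Equiv.refl J))) ?_).congr_right σ ?_
  · rintro (k | p | j) <;> rfl
  · rintro (k | p) <;> rfl

end ApproxRearrangement

section ClusterPoints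

variable {α : Type*} [TopologicalSpace α] {a : ℕ → α} {x : α}

theorem exists_isOpen_finite_of_not_mapClusterPt (h : ¬MapClusterPt x atTop a) :
    ∃ U, IsOpen U ∧ x ∈ U ∧ {k | a k ∈ U}.Finite := by
  rw [mapClusterPt_iff_frequently] at h
  push Not at h
  obtain ⟨s, hs, hfreq⟩ := h
  obtain ⟨U, hUs, hU, hxU⟩ := mem_nhds_iff.1 hs
  rw [← Nat.cofinite_eq_atTop, eventually_cofinite] at hfreq
  exact ⟨U, hU, hxU, hfreq.subset fun k hk => not_not.2 (hUs hk)⟩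

theorem finite_closure_range_inter [T1Space α] {U : Set α} (hU : IsOpen U)
    (hfin : {k | a k ∈ U}.Finite) : (closure (range a) ∩ U).Finite := by
  have himage : U ∩ range a = a '' {k | a k ∈ U} := by
    ext y; constructor
    · rintro ⟨hy, k, rfl⟩; exact ⟨k, hy, rfl⟩
    · rintro ⟨k, hk, rfl⟩; exact ⟨hk, k, rfl⟩
  refine (hfin.image a).subset ?_
  calc closure (range a) ∩ U = U ∩ closure (range a) := inter_comm _ _
    _ ⊆ closure (U ∩ range a) := hU.inter_closure
    _ = a '' {k | a k ∈ U} := by rw [himage, (hfin.image a).isClosed.closure_eq]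

end ClusterPoints

theorem exists_inter_ball_eq_singleton {α : Type*} [MetricSpace α] {X U : Set α} {y : α}
    (hU : IsOpen U) (hyU : y ∈ U) (hyX : y ∈ X) (hfin : (X ∩ U).Finite) :
    ∃ ε > 0, X ∩ Metric.ball y ε = {y} := by
  have hV : IsOpen (U \ ((X ∩ U) \ {y})) := hU.sdiff hfin.sdiff.isClosed
  obtain ⟨ε, hε, hball⟩ := Metric.isOpen_iff.1 hV y ⟨hyU, fun h => h.2 rfl⟩
  refine ⟨ε, hε, Subset.antisymm (fun z hz => ?_) ?_⟩
  · obtain ⟨hzU, hz'⟩ := hball hz.2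
    by_contra hzy
    exact hz' ⟨⟨hz.1, hzU⟩, hzy⟩
  · rintro z rfl
    exact ⟨hyX, Metric.mem_ball_self hε⟩

section SameClosure

open Cardinal

def SameIsolatedMultiplicity (ξ ζ : ℕ → ℝ) (X : Set ℝ) : Prop :=
  ∀ x ∈ X, (∃ ε > (0 : ℝ), X ∩ Metric.ball x ε = {x}) → #{k : ℕ | ξ k = x} = #{k : ℕ | ζ k = x}

theorem SameIsolatedMultiplicity.symm {ξ ζ : ℕ → ℝ} {X : Set ℝ}
    (h : SameIsolatedMultiplicity ξ ζ X) : SameIsolatedMultiplicity ζ ξ X :=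
  fun x hx hisol => (h x hx hisol).symm

variable {ξ ζ : ℕ → ℝ} {X : Set ℝ}

theorem mapClusterPt_of_mapClusterPt (hξ : closure (range ξ) = X)
    (hζ : closure (range ζ) = X) (hiso : SameIsolatedMultiplicity ξ ζ X) {x : ℝ}
    (h : MapClusterPt x atTop ζ) : MapClusterPt x atTop ξ := by
  by_contra hx
  obtain ⟨U, hU, hxU, hfin⟩ := exists_isOpen_finite_of_not_mapClusterPt hx
  have hXU : (X ∩ U).Finite := hξ ▸ finite_closure_range_inter hU hfin
  have hinf : {j | ζ j ∈ U}.Infinite :=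
    Nat.frequently_atTop_iff_infinite.1 (mapClusterPt_iff_frequently.1 h U (hU.mem_nhds hxU))
  obtain ⟨y, hy, hyinf⟩ : ∃ y ∈ X ∩ U, {j | ζ j = y}.Infinite := by
    by_contra! hall
    refine hinf ((hXU.biUnion hall).subset fun j hj => mem_biUnion ⟨?_, hj⟩ rfl)
    exact hζ ▸ subset_closure (mem_range_self j)
  have hcard := hiso y hy.1 (exists_inter_ball_eq_singleton hU hy.2 hy.1 hXU)
  have hξfin : Finite {k | ξ k = y} :=
    (hfin.subset fun k (hk : ξ k = y) => show ξ k ∈ U by rw [hk]; exact hy.2).to_subtype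
  exact hyinf (finite_coe_iff.1 (.of_equiv _ (Cardinal.eq.1 hcard).some))

theorem mapClusterPt_iff_mapClusterPt (hξ : closure (range ξ) = X) (hζ : closure (range ζ) = X)
    (hiso : SameIsolatedMultiplicity ξ ζ X) {x : ℝ} :
    MapClusterPt x atTop ξ ↔ MapClusterPt x atTop ζ :=
  ⟨mapClusterPt_of_mapClusterPt hζ hξ hiso.symm,
    mapClusterPt_of_mapClusterPt hξ hζ hiso⟩

theorem mk_fiber_eq_of_not_mapClusterPt (hξ : closure (range ξ) = X)
    (hζ : closure (range ζ) = X) (hiso : SameIsolatedMultiplicity ξ ζ X) {c : ℝ}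
    (hc : ¬MapClusterPt c atTop ξ) : #{k // ξ k = c} = #{k // ζ k = c} := by
  by_cases hcX : c ∈ X
  · obtain ⟨U, hU, hcU, hfin⟩ := exists_isOpen_finite_of_not_mapClusterPt hc
    exact hiso c hcX (exists_inter_ball_eq_singleton hU hcU hcX
      (hξ ▸ finite_closure_range_inter hU hfin))
  · have hempty : ∀ a : ℕ → ℝ, closure (range a) = X → IsEmpty {k // a k = c} :=
      fun a ha => ⟨fun ⟨k, hk⟩ => hcX (ha ▸ hk ▸ subset_closure (mem_range_self k))⟩
    have := hempty ξ hξ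
    have := hempty ζ hζ
    simp only [mk_eq_zero]

def clusterIndices (a : ℕ → ℝ) : Set ℕ := {k | MapClusterPt (a k) atTop a}

theorem exists_equiv_sumElim_clusterIndices (hξ : closure (range ξ) = X)
    (hζ : closure (range ζ) = X) (hiso : SameIsolatedMultiplicity ξ ζ X) :
    ∃ e : ℕ ⊕ clusterIndices ζ ≃ ℕ ⊕ clusterIndices ξ,
      ∀ x, Sum.elim ζ (ξ ∘ (↑)) (e x) = Sum.elim ξ (ζ ∘ (↑)) x := by
  have hfiber : ∀ c, #{x // Sum.elim ξ (ζ ∘ (↑) : clusterIndices ζ → ℝ) x = c} =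
      #{x // Sum.elim ζ (ξ ∘ (↑) : clusterIndices ξ → ℝ) x = c} := by
    intro c
    simp only [mk_congr Equiv.subtypeSum, mk_sum, lift_id, Sum.elim_inl, Sum.elim_inr,
      Function.comp_apply]
    by_cases hc : MapClusterPt c atTop ξ
    · have hc' := (mapClusterPt_iff_mapClusterPt hξ hζ hiso).1 hc
      rw [mk_congr (Equiv.subtypeSubtypeEquivSubtype (p := (· ∈ clusterIndices ζ))
          fun {j} (hj : ζ j = c) => show MapClusterPt (ζ j) atTop ζ from hj ▸ hc'),
        mk_congr (Equiv.subtypeSubtypeEquivSubtype (p := (· ∈ clusterIndices ξ))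
          fun {k} (hk : ξ k = c) => show MapClusterPt (ξ k) atTop ξ from hk ▸ hc), add_comm]
    · have hc' := mt (mapClusterPt_iff_mapClusterPt hξ hζ hiso).2 hc
      have : IsEmpty {j : clusterIndices ζ // ζ j = c} := ⟨fun ⟨j, hj⟩ => hc' (hj ▸ j.2)⟩
      have : IsEmpty {k : clusterIndices ξ // ξ k = c} := ⟨fun ⟨k, hk⟩ => hc (hk ▸ k.2)⟩
      rw [mk_fiber_eq_of_not_mapClusterPt hξ hζ hiso hc,
        mk_eq_zero {j : clusterIndices ζ // ζ j = c}, mk_eq_zero {k : clusterIndices ξ // ξ k = c}]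
  exact ⟨.ofFiberEquiv fun c => (Cardinal.eq.1 (hfiber c)).some, Equiv.ofFiberEquiv_map _⟩

end SameClosure

theorem exists_approxRearrangement {ξ ζ : ℕ → ℝ} {X : Set ℝ} (hξ : closure (range ξ) = X)
    (hζ : closure (range ζ) = X) (hiso : SameIsolatedMultiplicity ξ ζ X) {ε : ℝ} (hε : 0 < ε) :
    ApproxRearrangement ε ξ ζ := by
  obtain ⟨e, he⟩ := exists_equiv_sumElim_clusterIndices hξ hζ hiso
  have hξabsorb := ApproxRearrangement.sumElim_of_mapClusterPt ξ (ζ ∘ (↑) : clusterIndices ζ → ℝ)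
    (fun j => (mapClusterPt_iff_mapClusterPt hξ hζ hiso).2 j.2) (half_pos hε)
  have hζabsorb := ApproxRearrangement.sumElim_of_mapClusterPt ζ (ξ ∘ (↑) : clusterIndices ξ → ℝ)
    (fun k => (mapClusterPt_iff_mapClusterPt hξ hζ hiso).1 k.2) (half_pos hε)
  simpa using (hξabsorb.symm.congr_right e he).trans hζabsorb

theorem exists_linearIsometryEquiv_apply_eq {𝕜 ι ι' E F : Type*} [RCLike 𝕜]
    [NormedAddCommGroup E] [InnerProductSpace 𝕜 E] [CompleteSpace E]
    [NormedAddCommGroup F] [InnerProductSpace 𝕜 F] [CompleteSpace F]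
    {v : ι → E} {w : ι' → F} (hv : Orthonormal 𝕜 v) (hw : Orthonormal 𝕜 w)
    (hvtot : (Submodule.span 𝕜 (range v)).topologicalClosure = ⊤)
    (hwtot : (Submodule.span 𝕜 (range w)).topologicalClosure = ⊤) (π : ι ≃ ι') :
    ∃ U : E ≃ₗᵢ[𝕜] F, ∀ i, U (v i) = w (π i) := by
  classical
  have hwπtot : ⊤ ≤ (Submodule.span 𝕜 (range (w ∘ π))).topologicalClosure := by
    rw [EquivLike.range_comp, hwtot]
  let bv := HilbertBasis.mk hv hvtot.ge
  let bw := HilbertBasis.mk (hw.comp π π.injective) hwπtot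
  refine ⟨bv.repr.trans bw.repr.symm, fun i => ?_⟩
  have hvi : bv i = v i := congrFun (HilbertBasis.coe_mk hv _) i
  have hwi : bw i = w (π i) := congrFun (HilbertBasis.coe_mk _ _) i
  rw [LinearIsometryEquiv.trans_apply, ← hvi, ← hwi, bv.repr_self, bw.repr_symm_single]

/-- diagonal case of Weyl–von Neumann–Berg. Let `H₁`, `H₂` be complex
Hilbert spaces with Hilbert bases `(v k)`, `(w k)`, and let `(ξ k)`, `(ζ k)` be real
sequences whose ranges have the same closure `X`, each isolated point of `X` being
repeated the same number of times in both sequences.  Then for every `ε > 0` there are a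
permutation `π` of the indices and a unitary `U : H₁ → H₂` with `U (v k) = w (π k)`,
`|ξ k - ζ (π k)| < ε` for all `k`, and `ξ k - ζ (π k) → 0`. -/
theorem stmt13 {H₁ H₂ : Type*}
    [NormedAddCommGroup H₁] [InnerProductSpace ℂ H₁] [CompleteSpace H₁]
    [NormedAddCommGroup H₂] [InnerProductSpace ℂ H₂] [CompleteSpace H₂]
    (v : ℕ → H₁) (w : ℕ → H₂)
    (hv : Orthonormal ℂ v) (hw : Orthonormal ℂ w)
    (hvtot : (Submodule.span ℂ (Set.range v)).topologicalClosure = ⊤)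
    (hwtot : (Submodule.span ℂ (Set.range w)).topologicalClosure = ⊤)
    (ξ ζ : ℕ → ℝ) (X : Set ℝ)
    (hξ : closure (Set.range ξ) = X) (hζ : closure (Set.range ζ) = X)
    (hiso : ∀ x ∈ X, (∃ ε > (0 : ℝ), X ∩ Metric.ball x ε = {x}) →
      Cardinal.mk {k : ℕ | ξ k = x} = Cardinal.mk {k : ℕ | ζ k = x}) :
    ∀ ε : ℝ, 0 < ε → ∃ (π : Equiv.Perm ℕ) (U : H₁ ≃ₗᵢ[ℂ] H₂),
      (∀ k, U (v k) = w (π k)) ∧ (∀ k, |ξ k - ζ (π k)| < ε) ∧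
      Filter.Tendsto (fun k => ξ k - ζ (π k)) Filter.atTop (nhds 0) := by
  intro ε hε
  obtain ⟨π, hclose, hlim⟩ := exists_approxRearrangement hξ hζ hiso hε
  obtain ⟨U, hU⟩ := exists_linearIsometryEquiv_apply_eq hv hw hvtot hwtot π
  exact ⟨π, U, hU, hclose, Nat.cofinite_eq_atTop ▸ hlim⟩
end

section
/- Let μ and ν be finite Borel measures on ℝ. Then μ = ν if and only if there exists a unitary operator V : L²(ℝ, μ) → L²(ℝ, ν) such that V maps the constant function 1 to the constant function 1 and V(g·f) = g·(Vf) for every bounded Borel function g : ℝ → ℂ and every f ∈ L²(ℝ, μ). -/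
open MeasureTheory ENNReal

lemma Filter.EventuallyEq.mul_left_eq_self {α M : Type*} [MulOneClass M] {l : Filter α}
    (g : α → M) {f : α → M} (hf : f =ᶠ[l] 1) : (fun x => g x * f x) =ᶠ[l] g := by
  filter_upwards [hf] with x hx
  rw [hx, Pi.one_apply, mul_one]

namespace MeasureTheory

variable {α E : Type*} [MeasurableSpace α] {μ ν : Measure α} {p : ℝ≥0∞}

lemma measure_eq_of_eLpNorm_indicator_const_eq [NormedAddCommGroup E] {s : Set α} {c : E}
    (hs : MeasurableSet s) (hc : c ≠ 0) (hp : p ≠ 0) (hp_top : p ≠ ∞)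
    (h : eLpNorm (s.indicator fun _ => c) p μ = eLpNorm (s.indicator fun _ => c) p ν) :
    μ s = ν s := by
  rw [eLpNorm_indicator_const hs hp hp_top, eLpNorm_indicator_const hs hp hp_top,
    ENNReal.mul_right_inj (enorm_ne_zero.mpr hc) enorm_ne_top] at h
  have hp_inv : 1 / p.toReal ≠ 0 := one_div_ne_zero (ENNReal.toReal_ne_zero.mpr ⟨hp, hp_top⟩)
  exact ENNReal.rpow_left_injective hp_inv h

lemma eLpNorm_eq_of_linearIsometry_toLp {𝕜 : Type*} [NormedField 𝕜] [NormedAddCommGroup E]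
    [NormedSpace 𝕜 E] [Fact (1 ≤ p)] (V : Lp E p μ →ₗᵢ[𝕜] Lp E p ν) {f g : α → E}
    (hf : MemLp f p μ) (hg : MemLp g p ν) (hV : V (hf.toLp f) = hg.toLp g) :
    eLpNorm f p μ = eLpNorm g p ν := by
  have h := congrArg norm hV
  rw [V.norm_map, Lp.norm_toLp, Lp.norm_toLp] at h
  exact (ENNReal.toReal_eq_toReal_iff' hf.eLpNorm_ne_top hg.eLpNorm_ne_top).mp h

/-- Testing the multiplier property on `1` and on indicators `𝟙_s` shows `V 𝟙_s = 𝟙_s`, so the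
isometry gives `μ s ^ (1/p) = ‖𝟙_s‖ = ν s ^ (1/p)`. -/
theorem Measure.eq_of_linearIsometry_map_one_of_map_mul [IsFiniteMeasure μ] [IsFiniteMeasure ν]
    [Fact (1 ≤ p)] (hp_top : p ≠ ∞) (V : Lp ℂ p μ →ₗᵢ[ℂ] Lp ℂ p ν)
    (hV_one : ∀ (h₁ : MemLp (fun _ : α => (1 : ℂ)) p μ) (h₂ : MemLp (fun _ : α => (1 : ℂ)) p ν),
      V (h₁.toLp _) = h₂.toLp _)
    (hV_mul : ∀ g : α → ℂ, Measurable g → (∃ C : ℝ, ∀ x, ‖g x‖ ≤ C) → ∀ f : Lp ℂ p μ,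
      ∀ (h₁ : MemLp (fun x => g x * f x) p μ) (h₂ : MemLp (fun x => g x * (V f : α → ℂ) x) p ν),
        V (h₁.toLp _) = h₂.toLp _) :
    μ = ν := by
  ext s hs
  set g : α → ℂ := s.indicator fun _ => 1
  have hg_bdd : ∀ x, ‖g x‖ ≤ 1 := fun x => by by_cases hx : x ∈ s <;> simp [g, hx]
  have h1μ : MemLp (fun _ : α => (1 : ℂ)) p μ := memLp_const 1
  have h1ν : MemLp (fun _ : α => (1 : ℂ)) p ν := memLp_const 1
  have hμ : (fun x => g x * h1μ.toLp _ x) =ᵐ[μ] g := .mul_left_eq_self g h1μ.coeFn_toLp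
  have hν : (fun x => g x * V (h1μ.toLp _) x) =ᵐ[ν] g := by
    rw [hV_one h1μ h1ν]
    exact .mul_left_eq_self g h1ν.coeFn_toLp
  have hgμ : MemLp g p μ := memLp_indicator_const p hs 1 (.inr (measure_ne_top μ s))
  have hgν : MemLp g p ν := memLp_indicator_const p hs 1 (.inr (measure_ne_top ν s))
  have hV_g : V (hgμ.toLp g) = hgν.toLp g := by
    have h := hV_mul g (measurable_const.indicator hs) ⟨1, hg_bdd⟩ (h1μ.toLp _)
      (hgμ.ae_eq hμ.symm) (hgν.ae_eq hν.symm)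
    rwa [MemLp.toLp_congr _ hgμ hμ, MemLp.toLp_congr _ hgν hν] at h
  exact measure_eq_of_eLpNorm_indicator_const_eq hs one_ne_zero
    (zero_lt_one.trans_le Fact.out).ne' hp_top (eLpNorm_eq_of_linearIsometry_toLp V hgμ hgν hV_g)

end MeasureTheory

/-- Two finite Borel measures `μ`, `ν` on `ℝ` are equal if and only if
there exists a unitary `V : L²(ℝ, μ) → L²(ℝ, ν)` sending the constant function `1` to the
constant function `1` and commuting with multiplication by every bounded Borel function. -/
theorem stmt14 (μ ν : Measure ℝ) [IsFiniteMeasure μ] [IsFiniteMeasure ν] :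
    μ = ν ↔
      ∃ V : Lp ℂ 2 μ ≃ₗᵢ[ℂ] Lp ℂ 2 ν,
        (∀ (h₁ : MemLp (fun _ : ℝ => (1 : ℂ)) 2 μ)
           (h₂ : MemLp (fun _ : ℝ => (1 : ℂ)) 2 ν),
            V (h₁.toLp _) = h₂.toLp _) ∧
        (∀ g : ℝ → ℂ, Measurable g → (∃ C : ℝ, ∀ x, ‖g x‖ ≤ C) →
          ∀ f : Lp ℂ 2 μ,
            ∀ (h₁ : MemLp (fun x => g x * f x) 2 μ)
              (h₂ : MemLp (fun x => g x * (V f : ℝ → ℂ) x) 2 ν),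
              V (h₁.toLp _) = h₂.toLp _) := by
  constructor
  · rintro rfl
    exact ⟨LinearIsometryEquiv.refl ℂ _, fun _ _ => rfl, fun _ _ _ _ _ _ => rfl⟩
  · rintro ⟨V, hV_one, hV_mul⟩
    exact Measure.eq_of_linearIsometry_map_one_of_map_mul ENNReal.ofNat_ne_top
      V.toLinearIsometry hV_one hV_mul
end

section
/- Let μ and ν be finite Borel measures on ℝ. Then μ and ν are mutually singular if and only if for every Borel measure ρ on ℝ and all f, g ∈ L²(ℝ, ρ) satisfying ∫_E |f|² dρ = μ(E) and ∫_E |g|² dρ = ν(E) for every Borel set E, one has ⟨f, g⟩_{L²(ρ)} = 0. -/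
/-!
If `μ ⟂ₘ ν` through a set `s`, the spectral-measure identities force `f = 0` a.e. on `s` and
`g = 0` a.e. off `s`, so `f * conj g` vanishes `ρ`-a.e. Conversely, over `ρ = μ + ν` the square
roots of the Radon–Nikodym derivatives `dμ/dρ` and `dν/dρ` have spectral measures `μ` and `ν`.
Their inner product is the Hellinger affinity `∫ √(dμ/dρ) √(dν/dρ) dρ`; its vanishing means that
the two densities have `ρ`-a.e. disjoint supports, i.e. `μ ⟂ₘ ν`.
-/

open MeasureTheory ComplexConjugate
open scoped ENNReal

namespace MeasureTheory

variable {α 𝕜 : Type*} [MeasurableSpace α] [RCLike 𝕜]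

theorem ae_eq_zero_of_setLIntegral_nnnorm_sq_eq_zero {E : Type*} [NormedAddCommGroup E]
    {ρ : Measure α} {f : α → E} {s : Set α} (hf : AEStronglyMeasurable f ρ)
    (hs : MeasurableSet s) (h : ∫⁻ x in s, (‖f x‖₊ : ℝ≥0∞) ^ 2 ∂ρ = 0) :
    ∀ᵐ x ∂ρ, x ∈ s → f x = 0 := by
  simp only [← enorm_eq_nnnorm] at h
  rw [lintegral_eq_zero_iff' (hf.restrict.enorm.pow_const 2)] at h
  rw [← ae_restrict_iff' hs]
  filter_upwards [h] with x hx
  simpa using hx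

theorem integral_mul_conj_eq_zero_of_mutuallySingular {μ ν ρ : Measure α} {f g : α → 𝕜}
    (hμν : μ ⟂ₘ ν) (hf : AEStronglyMeasurable f ρ) (hg : AEStronglyMeasurable g ρ)
    (hfμ : ∀ E, MeasurableSet E → ∫⁻ x in E, (‖f x‖₊ : ℝ≥0∞) ^ 2 ∂ρ = μ E)
    (hgν : ∀ E, MeasurableSet E → ∫⁻ x in E, (‖g x‖₊ : ℝ≥0∞) ^ 2 ∂ρ = ν E) :
    ∫ x, f x * conj (g x) ∂ρ = 0 := by
  obtain ⟨s, hs, hμs, hνs⟩ := hμν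
  have hf0 := ae_eq_zero_of_setLIntegral_nnnorm_sq_eq_zero hf hs ((hfμ s hs).trans hμs)
  have hg0 :=
    ae_eq_zero_of_setLIntegral_nnnorm_sq_eq_zero hg hs.compl ((hgν _ hs.compl).trans hνs)
  refine integral_eq_zero_of_ae ?_
  filter_upwards [hf0, hg0] with x hfx hgx
  by_cases hx : x ∈ s
  · simp [hfx hx]
  · simp [hgx hx]

namespace Measure

noncomputable def sqrtRnDeriv (μ ρ : Measure α) (x : α) : ℝ := √(μ.rnDeriv ρ x).toReal

variable {μ ν ρ : Measure α}

theorem sqrtRnDeriv_nonneg (x : α) : 0 ≤ sqrtRnDeriv μ ρ x := Real.sqrt_nonneg _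

theorem measurable_sqrtRnDeriv : Measurable (sqrtRnDeriv μ ρ) :=
  (measurable_rnDeriv μ ρ).ennreal_toReal.sqrt

theorem nnnorm_sq_sqrtRnDeriv_ae_eq_rnDeriv [SigmaFinite μ] :
    ∀ᵐ x ∂ρ, (‖(sqrtRnDeriv μ ρ x : 𝕜)‖₊ : ℝ≥0∞) ^ 2 = μ.rnDeriv ρ x := by
  filter_upwards [rnDeriv_lt_top μ ρ] with x hx
  rw [← enorm_eq_nnnorm, ← ofReal_norm, ← ENNReal.ofReal_pow (norm_nonneg _), RCLike.norm_ofReal,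
    sq_abs, sqrtRnDeriv, Real.sq_sqrt ENNReal.toReal_nonneg, ENNReal.ofReal_toReal hx.ne]

theorem setLIntegral_nnnorm_sq_sqrtRnDeriv [SigmaFinite μ] [μ.HaveLebesgueDecomposition ρ]
    [SFinite ρ] (hμρ : μ ≪ ρ) (E : Set α) :
    ∫⁻ x in E, (‖(sqrtRnDeriv μ ρ x : 𝕜)‖₊ : ℝ≥0∞) ^ 2 ∂ρ = μ E := by
  rw [← setLIntegral_rnDeriv hμρ]
  exact lintegral_congr_ae (ae_restrict_of_ae nnnorm_sq_sqrtRnDeriv_ae_eq_rnDeriv)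

theorem memLp_sqrtRnDeriv [IsFiniteMeasure μ] : MemLp (sqrtRnDeriv μ ρ) 2 ρ := by
  rw [memLp_two_iff_integrable_sq_norm measurable_sqrtRnDeriv.aestronglyMeasurable]
  refine (integrable_toReal_rnDeriv (μ := μ)).congr (.of_forall fun x => ?_)
  simp [sqrtRnDeriv]

theorem integral_ofReal_sqrtRnDeriv_mul_conj :
    ∫ x, (sqrtRnDeriv μ ρ x : 𝕜) * conj (sqrtRnDeriv ν ρ x : 𝕜) ∂ρ =
      ↑(∫ x, sqrtRnDeriv μ ρ x * sqrtRnDeriv ν ρ x ∂ρ) := by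
  simp only [RCLike.conj_ofReal, ← RCLike.ofReal_mul, integral_ofReal]

theorem mutuallySingular_of_rnDeriv_eq_zero_or_eq_zero [μ.HaveLebesgueDecomposition ρ]
    [ν.HaveLebesgueDecomposition ρ] (hμρ : μ ≪ ρ) (hνρ : ν ≪ ρ)
    (h : ∀ᵐ x ∂ρ, μ.rnDeriv ρ x = 0 ∨ ν.rnDeriv ρ x = 0) : μ ⟂ₘ ν := by
  have hs : MeasurableSet {x | μ.rnDeriv ρ x = 0} :=
    measurable_rnDeriv μ ρ (measurableSet_singleton 0)
  refine ⟨_, hs, ?_, ?_⟩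
  · rw [← setLIntegral_rnDeriv' hμρ hs, setLIntegral_congr_fun hs (fun x hx => hx),
      lintegral_zero]
  · rw [← setLIntegral_rnDeriv' hνρ hs.compl, setLIntegral_congr_fun_ae hs.compl, lintegral_zero]
    filter_upwards [h] with x hx hxs using hx.resolve_left hxs

theorem mutuallySingular_of_integral_sqrtRnDeriv_mul_eq_zero [IsFiniteMeasure μ]
    [IsFiniteMeasure ν] [μ.HaveLebesgueDecomposition ρ] [ν.HaveLebesgueDecomposition ρ]
    (hμρ : μ ≪ ρ) (hνρ : ν ≪ ρ) (h : ∫ x, sqrtRnDeriv μ ρ x * sqrtRnDeriv ν ρ x ∂ρ = 0) :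
    μ ⟂ₘ ν := by
  have hint : Integrable (fun x => sqrtRnDeriv μ ρ x * sqrtRnDeriv ν ρ x) ρ :=
    memLp_sqrtRnDeriv.integrable_mul memLp_sqrtRnDeriv
  rw [integral_eq_zero_iff_of_nonneg
    (fun x => mul_nonneg (sqrtRnDeriv_nonneg x) (sqrtRnDeriv_nonneg x)) hint] at h
  refine mutuallySingular_of_rnDeriv_eq_zero_or_eq_zero hμρ hνρ ?_
  filter_upwards [h, rnDeriv_lt_top μ ρ, rnDeriv_lt_top ν ρ] with x hx hμx hνx
  simpa [sqrtRnDeriv, ENNReal.toReal_eq_zero_iff, hμx.ne, hνx.ne] using hx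

end Measure

end MeasureTheory

/-- Finite Borel measures `μ`, `ν` on `ℝ` are mutually singular if and
only if for every Borel measure `ρ` on `ℝ` and all `f, g ∈ L²(ℝ, ρ)` whose spectral
measures are `μ` and `ν` respectively (`∫_E |f|² dρ = μ E` and `∫_E |g|² dρ = ν E` for
every Borel set `E`), the inner product `⟨f, g⟩ = ∫ f ⬝ conj g dρ` vanishes. -/
theorem stmt15 (μ ν : Measure ℝ) [IsFiniteMeasure μ] [IsFiniteMeasure ν] :
    μ.MutuallySingular ν ↔
      ∀ (ρ : Measure ℝ) (f g : ℝ → ℂ), MemLp f 2 ρ → MemLp g 2 ρ →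
        (∀ E : Set ℝ, MeasurableSet E →
          (∫⁻ x in E, (‖f x‖₊ : ENNReal) ^ 2 ∂ρ) = μ E) →
        (∀ E : Set ℝ, MeasurableSet E →
          (∫⁻ x in E, (‖g x‖₊ : ENNReal) ^ 2 ∂ρ) = ν E) →
        (∫ x, f x * (starRingEnd ℂ) (g x) ∂ρ) = 0 := by
  refine ⟨fun hμν ρ f g hf hg hfμ hgν =>
    integral_mul_conj_eq_zero_of_mutuallySingular hμν hf.1 hg.1 hfμ hgν, fun H => ?_⟩
  have hμ : μ ≪ μ + ν := Measure.AbsolutelyContinuous.rfl.add_right ν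
  have hν : ν ≪ μ + ν := Measure.AbsolutelyContinuous.rfl.add_right' μ
  have h := H (μ + ν) _ _ Measure.memLp_sqrtRnDeriv.ofReal Measure.memLp_sqrtRnDeriv.ofReal
    (fun E _ => Measure.setLIntegral_nnnorm_sq_sqrtRnDeriv hμ E)
    (fun E _ => Measure.setLIntegral_nnnorm_sq_sqrtRnDeriv hν E)
  rw [Measure.integral_ofReal_sqrtRnDeriv_mul_conj, RCLike.ofReal_eq_zero] at h
  exact Measure.mutuallySingular_of_integral_sqrtRnDeriv_mul_eq_zero hμ hν h
end
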